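/- Let O₀ = k[[s, ε]]/(ε²) over a field k, and for n ≥ 1 let I_n be the ideal (s^n, ε) of O₀. Then the complex ... → O₀² → O₀² → O₀² → I_n → 0, with every differential given by the matrix [[ε, s^n], [0, −ε]] and augmentation (a, b) ↦ a·ε + b·s^n, is a free resolution of I_n, and dim_k Ext¹_{O₀}(I_n, I_n) = 2n. -/

import Mathlib

set_option maxHeartbeats 1000000
set_option synthInstance.maxHeartbeats 1000000

open TrivSqZeroExt

/-- the middle homology `ker f / im f` of the 2-periodic complex with differential `f` -/
noncomputable def HomologyOf {R M : Type} [CommRing R] [AddCommGroup M] [Module R M]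
    (f : M →ₗ[R] M) : Type :=
  ↥(LinearMap.ker f) ⧸ Submodule.comap (LinearMap.ker f).subtype (LinearMap.range f)

noncomputable instance {R M : Type} [CommRing R] [AddCommGroup M] [Module R M]
    (f : M →ₗ[R] M) : AddCommGroup (HomologyOf f) :=
  inferInstanceAs (AddCommGroup (_ ⧸ _))

noncomputable instance {R M : Type} [CommRing R] [AddCommGroup M] [Module R M]
    (f : M →ₗ[R] M) (S : Type) [CommRing S] [Algebra S R] : Module S (HomologyOf f) :=
  Module.compHom (↥(LinearMap.ker f) ⧸
    Submodule.comap (LinearMap.ker f).subtype (LinearMap.range f)) (algebraMap S R)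


/-- `O₀ = k[[s, ε]]/(ε²)`, modelled as the dual numbers over `k[[s]]`. -/
abbrev RibbonLocalRing (k : Type) [Field k] : Type := DualNumber (PowerSeries k)

/-- the element `s` of `O₀` -/
noncomputable def sElt (k : Type) [Field k] : RibbonLocalRing k := inl PowerSeries.X

/-- the element `ε` of `O₀` -/
noncomputable def epsElt (k : Type) [Field k] : RibbonLocalRing k := DualNumber.eps

/-- the ideal `I_n = (sⁿ, ε)` of `O₀` -/
noncomputable def In (k : Type) [Field k] (n : ℕ) : Ideal (RibbonLocalRing k) :=
  Ideal.span {sElt k ^ n, epsElt k}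

/-- the differential `O₀² → O₀²` given by the matrix `[[ε, sⁿ], [0, -ε]]`:
`(a, b) ↦ (ε a + sⁿ b, -ε b)`. -/
noncomputable def resDiff (k : Type) [Field k] (n : ℕ) :
    (RibbonLocalRing k × RibbonLocalRing k) →ₗ[RibbonLocalRing k]
      (RibbonLocalRing k × RibbonLocalRing k) :=
  LinearMap.prod
    ((epsElt k • LinearMap.id).comp (LinearMap.fst _ _ _) +
      ((sElt k ^ n) • LinearMap.id).comp (LinearMap.snd _ _ _))
    (-((epsElt k • LinearMap.id).comp (LinearMap.snd _ _ _)))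

/-- the augmentation `O₀² → O₀`, `(a, b) ↦ a ε + b sⁿ`, with image `I_n` (the generators
`e = sⁿ` and `f = ε` of `I_n` are listed in the order matching the matrix above). -/
noncomputable def resAug (k : Type) [Field k] (n : ℕ) :
    (RibbonLocalRing k × RibbonLocalRing k) →ₗ[RibbonLocalRing k] RibbonLocalRing k :=
  (epsElt k • LinearMap.id).comp (LinearMap.fst _ _ _) +
    ((sElt k ^ n) • LinearMap.id).comp (LinearMap.snd _ _ _)

/-- the induced differential on `Hom(O₀², I_n) ≅ I_n × I_n`:
`(x, y) ↦ (ε x, sⁿ x - ε y)`, i.e. the transpose of `[[ε, sⁿ], [0, -ε]]` applied to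
`I_n`-valued homomorphisms.  `Ext¹(I_n, I_n)` is its middle homology. -/
noncomputable def extDiff (k : Type) [Field k] (n : ℕ) :
    (In k n × In k n) →ₗ[RibbonLocalRing k] (In k n × In k n) :=
  LinearMap.prod
    ((epsElt k • LinearMap.id).comp (LinearMap.fst _ _ _))
    (((sElt k ^ n) • LinearMap.id).comp (LinearMap.fst _ _ _) -
      (epsElt k • LinearMap.id).comp (LinearMap.snd _ _ _))

/-- `Ext¹_{O₀}(I_n, I_n)`, computed from the 2-periodic free resolution of `I_n`. -/
noncomputable abbrev Ext1In (k : Type) [Field k] (n : ℕ) : Type :=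
  HomologyOf (extDiff k n)


/-!
Write elements of `O₀` as `a + b ε` with `a, b ∈ k[[s]]`; multiplication by `ε` sends `a + b ε` to
`a ε`, so everything reduces to divisibility by `sⁿ` in the domain `k[[s]]`, and `I_n` consists of
the `a + b ε` with `sⁿ ∣ a`. A pair `(a, b)` lies in the image of the differential iff
`ε a + sⁿ b = 0` and `ε b = 0`; the second condition is automatic in the kernel of the
augmentation because `sⁿ` is a non-zero-divisor, which gives exactness. For `Ext¹`, the cycles of
`Hom(O₀², I_n)` are the pairs `(ε q, sⁿ q + ε v)` with `q, v ∈ k[[s]]`, and such a cycle is a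
boundary iff `sⁿ` divides both `q` and `v`. Hence `Ext¹ ≅ (k[[s]]/(sⁿ))²`, of dimension `2n`.
-/

section Homology

variable {R M S V : Type} [CommRing R] [AddCommGroup M] [Module R M] [CommRing S] [Algebra S R]
  [Module S M] [IsScalarTower S R M] [AddCommGroup V] [Module S V]

/-- The identity, matching the `Module.compHom` structure of `HomologyOf f` with the quotient's own
`S`-module structure. -/
noncomputable def HomologyOf.equivQuotient (f : M →ₗ[R] M) :
    HomologyOf f ≃ₗ[S]
      ↥(LinearMap.ker f) ⧸ Submodule.comap (LinearMap.ker f).subtype (LinearMap.range f) where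
  __ := AddEquiv.refl _
  map_smul' c q := (algebraMap_smul (M := ↥(LinearMap.ker f) ⧸
    Submodule.comap (LinearMap.ker f).subtype (LinearMap.range f)) R c q)

theorem HomologyOf.finrank_eq_of_surjective (f : M →ₗ[R] M) (g : LinearMap.ker f →ₗ[S] V)
    (hg : Function.Surjective g) (hker : ∀ z, g z = 0 ↔ (z : M) ∈ LinearMap.range f) :
    Module.finrank S (HomologyOf f) = Module.finrank S V := by
  have hboundaries : LinearMap.ker g =
      (Submodule.comap (LinearMap.ker f).subtype (LinearMap.range f)).restrictScalars S := by
    ext z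
    exact hker z
  rw [(HomologyOf.equivQuotient (S := S) f).finrank_eq,
    ← (Submodule.Quotient.restrictScalarsEquiv S _).finrank_eq, ← hboundaries,
    (g.quotKerEquivOfSurjective hg).finrank_eq]

end Homology

namespace PowerSeries

variable {R : Type} [Semiring R]

noncomputable def initialCoeffs (n : ℕ) : R⟦X⟧ →ₗ[R] Fin n → R :=
  LinearMap.pi fun i => coeff (i : ℕ)

theorem initialCoeffs_eq_zero_iff {n : ℕ} {φ : R⟦X⟧} : initialCoeffs n φ = 0 ↔ X ^ n ∣ φ := by
  rw [X_pow_dvd_iff, funext_iff]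
  exact ⟨fun h m hm => h ⟨m, hm⟩, fun h i => h i i.2⟩

theorem initialCoeffs_surjective (n : ℕ) : Function.Surjective (initialCoeffs (R := R) n) :=
  fun p => ⟨mk fun m => if hm : m < n then p ⟨m, hm⟩ else 0, funext fun i => by
    simp [initialCoeffs, coeff_mk]⟩

end PowerSeries

open PowerSeries

section RibbonLocalRing

variable {k : Type} [Field k] {n : ℕ}

variable (k) in
theorem epsElt_mul_self : epsElt k * epsElt k = 0 := DualNumber.eps_mul_eps

@[simp]
theorem fst_epsElt : (epsElt k).fst = 0 := rfl

@[simp]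
theorem snd_epsElt : (epsElt k).snd = 1 := rfl

@[simp]
theorem fst_sElt : (sElt k).fst = X := rfl

@[simp]
theorem snd_sElt : (sElt k).snd = 0 := rfl

theorem mem_In_iff {z : RibbonLocalRing k} : z ∈ In k n ↔ X ^ n ∣ z.fst := by
  rw [In, Ideal.mem_span_pair]
  constructor
  · rintro ⟨a, b, rfl⟩
    exact ⟨a.fst, by simp [mul_comm]⟩
  · rintro ⟨c, hc⟩
    refine ⟨inl c, inl z.snd, TrivSqZeroExt.ext ?_ ?_⟩
    · simp [hc, mul_comm]
    · simp

theorem resAug_apply (a b : RibbonLocalRing k) :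
    resAug k n (a, b) = epsElt k * a + sElt k ^ n * b := rfl

theorem resDiff_apply (a b : RibbonLocalRing k) :
    resDiff k n (a, b) = (epsElt k * a + sElt k ^ n * b, -(epsElt k * b)) := rfl

theorem extDiff_apply (x y : In k n) :
    extDiff k n (x, y) = (epsElt k • x, sElt k ^ n • x - epsElt k • y) := rfl

end RibbonLocalRing

section Resolution

variable (k : Type) [Field k] (n : ℕ)

theorem range_resAug : LinearMap.range (resAug k n) =
    (In k n : Submodule (RibbonLocalRing k) (RibbonLocalRing k)) := by
  ext z
  constructor
  · rintro ⟨⟨a, b⟩, rfl⟩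
    exact mem_In_iff.2 ⟨b.fst, by simp [resAug_apply]⟩
  · intro hz
    obtain ⟨c, hc⟩ := mem_In_iff.1 hz
    refine ⟨(inl z.snd, inl c), TrivSqZeroExt.ext ?_ ?_⟩ <;> simp [resAug_apply, hc]

theorem mem_range_resDiff_iff {p : RibbonLocalRing k × RibbonLocalRing k} :
    p ∈ LinearMap.range (resDiff k n) ↔
      epsElt k * p.1 + sElt k ^ n * p.2 = 0 ∧ epsElt k * p.2 = 0 := by
  constructor
  · rintro ⟨⟨c, d⟩, rfl⟩
    rw [resDiff_apply]
    constructor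
    · linear_combination c * epsElt_mul_self k
    · linear_combination -d * epsElt_mul_self k
  · obtain ⟨a, b⟩ := p
    rintro ⟨h₁, h₂⟩
    have hb : b.fst = 0 := by simpa using congrArg TrivSqZeroExt.snd h₂
    have ha : a.fst + X ^ n * b.snd = 0 := by simpa using congrArg TrivSqZeroExt.snd h₁
    refine ⟨(inl a.snd, inl (-b.snd)), ?_⟩
    rw [resDiff_apply]
    refine Prod.ext (TrivSqZeroExt.ext ?_ ?_) (TrivSqZeroExt.ext ?_ ?_)
    · simp only [fst_add, fst_mul, fst_epsElt, fst_pow, fst_sElt, fst_inl]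
      linear_combination -ha
    all_goals simp [hb]

theorem ker_resAug_eq_range_resDiff :
    LinearMap.ker (resAug k n) = LinearMap.range (resDiff k n) := by
  ext ⟨a, b⟩
  rw [LinearMap.mem_ker, resAug_apply, mem_range_resDiff_iff]
  refine ⟨fun h => ⟨h, TrivSqZeroExt.ext ?_ ?_⟩, And.left⟩
  · simp
  · have hb : X ^ n * b.fst = 0 := by simpa using congrArg TrivSqZeroExt.fst h
    simpa using (mul_eq_zero.1 hb).resolve_left (pow_ne_zero n X_ne_zero)

theorem ker_resDiff_eq_range_resDiff :
    LinearMap.ker (resDiff k n) = LinearMap.range (resDiff k n) := by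
  ext ⟨a, b⟩
  rw [LinearMap.mem_ker, resDiff_apply, mem_range_resDiff_iff, Prod.mk_eq_zero, neg_eq_zero]

end Resolution

section Ext

variable (k : Type) [Field k] (n : ℕ)

theorem mem_ker_extDiff_iff {x y : In k n} :
    (x, y) ∈ LinearMap.ker (extDiff k n) ↔
      (x : RibbonLocalRing k).fst = 0 ∧
        (y : RibbonLocalRing k).fst = X ^ n * (x : RibbonLocalRing k).snd := by
  simp only [LinearMap.mem_ker, extDiff_apply, Prod.mk_eq_zero, Subtype.ext_iff,
    TrivSqZeroExt.ext_iff]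
  simpa using fun _ => sub_eq_zero.trans eq_comm

theorem mem_range_extDiff_iff {x y : In k n} (hxy : (x, y) ∈ LinearMap.ker (extDiff k n)) :
    (x, y) ∈ LinearMap.range (extDiff k n) ↔
      X ^ n ∣ (x : RibbonLocalRing k).snd ∧ X ^ n ∣ (y : RibbonLocalRing k).snd := by
  constructor
  · rintro ⟨⟨u, w⟩, huw⟩
    rw [extDiff_apply, Prod.mk.injEq] at huw
    obtain ⟨rfl, rfl⟩ := huw
    simpa using ⟨mem_In_iff.1 u.2, dvd_sub (dvd_mul_right _ _) (mem_In_iff.1 w.2)⟩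
  · rintro ⟨⟨a, ha⟩, ⟨b, hb⟩⟩
    obtain ⟨hx, hy⟩ := (mem_ker_extDiff_iff k n).1 hxy
    refine ⟨(⟨inl (X ^ n * a) + inr b, mem_In_iff.2 (by simp)⟩, 0), ?_⟩
    rw [extDiff_apply]
    refine Prod.ext (Subtype.ext (TrivSqZeroExt.ext ?_ ?_)) (Subtype.ext (TrivSqZeroExt.ext ?_ ?_))
    all_goals simp [hx, hy, ha, hb]

/-- A cycle `(ε q, sⁿ q + ε v)` is recorded by the first `n` coefficients of `q` and of `v`. -/
noncomputable def cycleCoeffs : LinearMap.ker (extDiff k n) →ₗ[k] (Fin n → k) × (Fin n → k) where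
  toFun z := (initialCoeffs n ((z : In k n × In k n).1 : RibbonLocalRing k).snd,
    initialCoeffs n ((z : In k n × In k n).2 : RibbonLocalRing k).snd)
  map_add' _ _ := by simp
  map_smul' _ _ := by simp

theorem cycleCoeffs_eq_zero_iff (z : LinearMap.ker (extDiff k n)) :
    cycleCoeffs k n z = 0 ↔ (z : In k n × In k n) ∈ LinearMap.range (extDiff k n) := by
  obtain ⟨⟨x, y⟩, hz⟩ := z
  rw [mem_range_extDiff_iff k n hz]
  simp [cycleCoeffs, initialCoeffs_eq_zero_iff]

theorem cycleCoeffs_surjective : Function.Surjective (cycleCoeffs k n) := by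
  rintro ⟨p, r⟩
  obtain ⟨q, rfl⟩ := initialCoeffs_surjective n p
  obtain ⟨v, rfl⟩ := initialCoeffs_surjective n r
  let x : In k n := ⟨inr q, mem_In_iff.2 (by simp)⟩
  let y : In k n := ⟨inl (X ^ n * q) + inr v, mem_In_iff.2 (by simp)⟩
  have hxy : (x, y) ∈ LinearMap.ker (extDiff k n) := (mem_ker_extDiff_iff k n).2 (by simp [x, y])
  exact ⟨⟨(x, y), hxy⟩, by simp [cycleCoeffs, x, y]⟩

theorem finrank_ext1In : Module.finrank k (Ext1In k n) = 2 * n := by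
  rw [HomologyOf.finrank_eq_of_surjective _ _ (cycleCoeffs_surjective k n)
    (cycleCoeffs_eq_zero_iff k n), Module.finrank_prod, Module.finrank_fin_fun, two_mul]

end Ext

theorem free_resolution_and_ext_dim_general (k : Type) [Field k] (n : ℕ) :
    LinearMap.range (resAug k n) = (In k n : Submodule (RibbonLocalRing k)
        (RibbonLocalRing k)) ∧
    LinearMap.ker (resAug k n) = LinearMap.range (resDiff k n) ∧
    LinearMap.ker (resDiff k n) = LinearMap.range (resDiff k n) ∧
    Module.finrank k (Ext1In k n) = 2 * n :=
  ⟨range_resAug k n, ker_resAug_eq_range_resDiff k n, ker_resDiff_eq_range_resDiff k n,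
    finrank_ext1In k n⟩

/-- The 2-periodic complex `⋯ → O₀² → O₀² → O₀² → I_n → 0` with differentials
`[[ε, sⁿ], [0, -ε]]` and augmentation `(a, b) ↦ a ε + b sⁿ` is a free resolution of
`I_n = (sⁿ, ε)`, and `dim_k Ext¹_{O₀}(I_n, I_n) = 2 n`. -/
theorem free_resolution_and_ext_dim (k : Type) [Field k] (n : ℕ) (hn : 1 ≤ n) :
    LinearMap.range (resAug k n) = (In k n : Submodule (RibbonLocalRing k)
        (RibbonLocalRing k)) ∧
    LinearMap.ker (resAug k n) = LinearMap.range (resDiff k n) ∧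
    LinearMap.ker (resDiff k n) = LinearMap.range (resDiff k n) ∧
    Module.finrank k (Ext1In k n) = 2 * n :=
  free_resolution_and_ext_dim_general k n
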